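/- Let d ≥ 2 be an integer. Suppose g : {−1,1}^n → V_d satisfies 0 < totinf(g) < 2^{−5d}. Then there exists η in the image of g such that P(g ≠ η) ≤ 2^{2d−1}·totinf(g) / ln(1/(2^{5d}·totinf(g))). -/

import Mathlib

open Finset MeasureTheory
open scoped BigOperators Classical

/-- Expectation over the uniform measure on the hypercube `{-1,1}^n` (coded by `Bool`). -/
noncomputable def expectation {n : ℕ} (f : (Fin n → Bool) → ℝ) : ℝ :=
  (∑ x : Fin n → Bool, f x) / 2 ^ n

/-- Probability of an event under the uniform measure on the hypercube. -/
noncomputable def pr {n : ℕ} (P : (Fin n → Bool) → Prop) : ℝ :=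
  expectation (fun x => if P x then (1 : ℝ) else 0)

/-- Walsh function `χ_S`. -/
noncomputable def walsh {n : ℕ} (S : Finset (Fin n)) (x : Fin n → Bool) : ℝ :=
  ∏ j ∈ S, (if x j then (1 : ℝ) else -1)

/-- Fourier--Walsh coefficient `f̂(S)`. -/
noncomputable def fwCoeff {n : ℕ} (f : (Fin n → Bool) → ℝ) (S : Finset (Fin n)) : ℝ :=
  expectation (fun x => f x * walsh S x)

/-- T-influence `Inf_S(f) = ∑_{T ⊇ S} f̂(T)^2`. -/
noncomputable def TInf {n : ℕ} (f : (Fin n → Bool) → ℝ) (S : Finset (Fin n)) : ℝ :=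
  ∑ T ∈ Finset.univ.filter (fun T : Finset (Fin n) => S ⊆ T), fwCoeff f T ^ 2

/-- Fourier weight at degrees `≥ d`. -/
noncomputable def Wge {n : ℕ} (d : ℕ) (f : (Fin n → Bool) → ℝ) : ℝ :=
  ∑ T ∈ Finset.univ.filter (fun T : Finset (Fin n) => d ≤ T.card), fwCoeff f T ^ 2

/-- Flip coordinate `i`. -/
def flipBit {n : ℕ} (y : Fin n → Bool) (i : Fin n) : Fin n → Bool :=
  Function.update y i (!(y i))

/-- `i` is `S`-pivotal for `f` on input `x`. -/
def pivotal {n : ℕ} (f : (Fin n → Bool) → ℝ) (S : Finset (Fin n)) (i : Fin n)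
    (x : Fin n → Bool) : Prop :=
  ∃ y : Fin n → Bool, (∀ j, j ∉ S → y j = x j) ∧ f y ≠ f (flipBit y i)

/-- Joint influence `JInf_S(f)`. -/
noncomputable def JInf {n : ℕ} (f : (Fin n → Bool) → ℝ) (S : Finset (Fin n)) : ℝ :=
  pr (fun x => ∀ i ∈ S, pivotal f S i x)

/-- Single-bit discrete partial derivative. -/
noncomputable def deriv1 {n : ℕ} (i : Fin n) (f : (Fin n → Bool) → ℝ) :
    (Fin n → Bool) → ℝ :=
  fun x => (f (Function.update x i true) - f (Function.update x i false)) / 2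

/-- Multi-bit discrete partial derivative `∂_S f`. -/
noncomputable def derivS {n : ℕ} (S : Finset (Fin n)) (f : (Fin n → Bool) → ℝ) :
    (Fin n → Bool) → ℝ :=
  S.toList.foldr deriv1 f

/-- Heat semigroup `P_t`. -/
noncomputable def heat {n : ℕ} (t : ℝ) (g : (Fin n → Bool) → ℝ) : (Fin n → Bool) → ℝ :=
  fun x => ∑ S : Finset (Fin n), Real.exp (-(S.card : ℝ) * t) * fwCoeff g S * walsh S x

/-- Squared `L²` norm. -/
noncomputable def norm2sq {n : ℕ} (g : (Fin n → Bool) → ℝ) : ℝ :=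
  expectation (fun x => g x ^ 2)

/-- Total influence. -/
noncomputable def totinf {n : ℕ} (f : (Fin n → Bool) → ℝ) : ℝ :=
  ∑ i : Fin n, TInf f {i}



namespace Stmt14

variable {n : ℕ}


lemma card_cube (n : ℕ) : ((Finset.univ : Finset (Fin n → Bool)).card : ℝ) = 2 ^ n := by
  rw [Finset.card_univ]
  simp [Fintype.card_fun]

lemma flip_flip (x : Fin n → Bool) (i : Fin n) : flipBit (flipBit x i) i = x := by
  funext j
  by_cases h : j = i
  · subst h; simp [flipBit]
  · simp [flipBit, Function.update_of_ne h]

lemma sum_flip (F : (Fin n → Bool) → ℝ) (i : Fin n) :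
    ∑ x : Fin n → Bool, F (flipBit x i) = ∑ x : Fin n → Bool, F x :=
  Fintype.sum_equiv (Function.Involutive.toPerm (fun x => flipBit x i) (fun x => flip_flip x i))
    _ _ (fun _ => rfl)

lemma sum_update_pair (F : (Fin n → Bool) → ℝ) (i : Fin n) :
    ∑ x : Fin n → Bool, (F (Function.update x i true) + F (Function.update x i false))
      = 2 * ∑ x : Fin n → Bool, F x := by
  have h : ∀ x : Fin n → Bool,
      F (Function.update x i true) + F (Function.update x i false)
        = F x + F (flipBit x i) := by
    intro x
    cases hx : x i with
    | false =>
      have h1 : Function.update x i false = x := by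
        conv_lhs => rw [← hx]
        exact Function.update_eq_self i x
      have h2 : Function.update x i true = flipBit x i := by
        simp [flipBit, hx]
      rw [h1, h2]; ring
    | true =>
      have h1 : Function.update x i true = x := by
        conv_lhs => rw [← hx]
        exact Function.update_eq_self i x
      have h2 : Function.update x i false = flipBit x i := by
        simp [flipBit, hx]
      rw [h1, h2]
  simp_rw [h]
  rw [Finset.sum_add_distrib, sum_flip]
  ring

lemma walsh_update_not_mem {S : Finset (Fin n)} {i : Fin n} (h : i ∉ S)
    (x : Fin n → Bool) (b : Bool) :
    walsh S (Function.update x i b) = walsh S x := by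
  unfold walsh
  refine Finset.prod_congr rfl fun j hj => ?_
  rw [Function.update_of_ne (by rintro rfl; exact h hj)]

lemma walsh_flip_mem {S : Finset (Fin n)} {i : Fin n} (h : i ∈ S) (x : Fin n → Bool) :
    walsh S (flipBit x i) = - walsh S x := by
  unfold walsh
  rw [← Finset.mul_prod_erase S _ h,
      ← Finset.mul_prod_erase S (fun j => if x j then (1:ℝ) else -1) h]
  have h1 : ∏ j ∈ S.erase i, (if (flipBit x i) j then (1:ℝ) else -1)
      = ∏ j ∈ S.erase i, (if x j then (1:ℝ) else -1) := by
    refine Finset.prod_congr rfl fun j hj => ?_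
    have hji : j ≠ i := Finset.ne_of_mem_erase hj
    simp [flipBit, Function.update_of_ne hji]
  rw [h1]
  have h2 : flipBit x i i = !(x i) := by simp [flipBit]
  rw [h2]
  cases x i <;> simp

lemma sum_walsh_walsh (x y : Fin n → Bool) :
    ∑ S : Finset (Fin n), walsh S x * walsh S y = if x = y then (2:ℝ)^n else 0 := by
  have key : ∀ S : Finset (Fin n), walsh S x * walsh S y =
      ∏ j ∈ S, ((if x j then (1:ℝ) else -1) * (if y j then (1:ℝ) else -1)) := by
    intro S; rw [walsh, walsh, ← Finset.prod_mul_distrib]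
  simp_rw [key]
  have hpa := Finset.prod_add
    (fun j : Fin n => (if x j then (1:ℝ) else -1) * (if y j then (1:ℝ) else -1))
    (fun _ : Fin n => (1:ℝ)) Finset.univ
  rw [Finset.powerset_univ] at hpa
  simp only [Finset.prod_const_one, mul_one] at hpa
  rw [← hpa]
  by_cases hxy : x = y
  · subst hxy
    rw [if_pos rfl]
    have h2 : ∀ j ∈ Finset.univ,
        ((if x j then (1:ℝ) else -1) * (if x j then (1:ℝ) else -1)) + 1 = 2 := by
      intro j _; cases x j <;> norm_num
    rw [Finset.prod_congr rfl h2, Finset.prod_const]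
    simp
  · rw [if_neg hxy]
    obtain ⟨j, hj⟩ : ∃ j, x j ≠ y j := by
      by_contra h; push_neg at h; exact hxy (funext h)
    refine Finset.prod_eq_zero (Finset.mem_univ j) ?_
    cases hxj : x j <;> cases hyj : y j <;> rw [hxj, hyj] at hj <;> simp at hj ⊢

lemma parseval (f : (Fin n → Bool) → ℝ) :
    ∑ S : Finset (Fin n), fwCoeff f S ^ 2 = norm2sq f := by
  have key : ∑ S : Finset (Fin n), (∑ x : Fin n → Bool, f x * walsh S x) ^ 2
      = 2^n * ∑ x : Fin n → Bool, f x ^ 2 := by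
    have e1 : ∀ S : Finset (Fin n), (∑ x : Fin n → Bool, f x * walsh S x) ^ 2
        = ∑ x : Fin n → Bool, ∑ y : Fin n → Bool, f x * f y * (walsh S x * walsh S y) := by
      intro S
      rw [sq, Finset.sum_mul_sum]
      exact Finset.sum_congr rfl fun x _ => Finset.sum_congr rfl fun y _ => by ring
    simp_rw [e1]
    rw [Finset.sum_comm]
    have e2 : ∀ x : Fin n → Bool,
        ∑ S : Finset (Fin n), ∑ y : Fin n → Bool, f x * f y * (walsh S x * walsh S y)
          = ∑ y : Fin n → Bool, f x * f y * (if x = y then (2:ℝ)^n else 0) := by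
      intro x
      rw [Finset.sum_comm]
      refine Finset.sum_congr rfl fun y _ => ?_
      rw [← Finset.mul_sum, sum_walsh_walsh]
    simp_rw [e2]
    simp only [mul_ite, mul_zero, Finset.sum_ite_eq, Finset.mem_univ, if_true]
    rw [Finset.mul_sum]
    exact Finset.sum_congr rfl fun x _ => by ring
  unfold fwCoeff norm2sq expectation
  simp_rw [div_pow]
  rw [← Finset.sum_div, key]
  have h2 : ((2:ℝ)^n) ≠ 0 := by positivity
  field_simp




lemma fwCoeff_deriv1_of_mem {i : Fin n} {S : Finset (Fin n)} (h : i ∈ S)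
    (f : (Fin n → Bool) → ℝ) : fwCoeff (deriv1 i f) S = 0 := by
  have h1 : ∀ x, deriv1 i f (flipBit x i) = deriv1 i f x := by
    intro x; unfold deriv1 flipBit; rw [Function.update_idem, Function.update_idem]
  have h2 := sum_flip (fun x => deriv1 i f x * walsh S x) i
  simp only [h1, walsh_flip_mem h, mul_neg] at h2
  rw [Finset.sum_neg_distrib] at h2
  have h3 : ∑ x : Fin n → Bool, deriv1 i f x * walsh S x = 0 := by linarith
  unfold fwCoeff expectation
  rw [h3, zero_div]

lemma fwCoeff_deriv1_of_not_mem {i : Fin n} {S : Finset (Fin n)} (h : i ∉ S)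
    (f : (Fin n → Bool) → ℝ) :
    fwCoeff (deriv1 i f) S = fwCoeff f (insert i S) := by
  unfold fwCoeff expectation
  have key : ∑ x : Fin n → Bool, f x * walsh (insert i S) x
      = ∑ x : Fin n → Bool, deriv1 i f x * walsh S x := by
    set G : (Fin n → Bool) → ℝ :=
      fun x => f x * ((if x i then (1:ℝ) else -1) * walsh S x) with hG
    have e1 : ∑ x : Fin n → Bool, f x * walsh (insert i S) x = ∑ x : Fin n → Bool, G x := by
      refine Finset.sum_congr rfl fun x _ => ?_
      rw [hG]
      unfold walsh
      rw [Finset.prod_insert h]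
    have e2 : ∀ x : Fin n → Bool, G (Function.update x i true) + G (Function.update x i false)
        = 2 * (deriv1 i f x * walsh S x) := by
      intro x
      rw [hG]
      simp only [Function.update_self]
      have hT : (if (true:Bool) = true then (1:ℝ) else -1) = 1 := rfl
      have hF : (if (false:Bool) = true then (1:ℝ) else -1) = -1 := rfl
      rw [walsh_update_not_mem h, walsh_update_not_mem h]
      unfold deriv1
      simp only [if_true, Bool.false_eq_true, if_false]
      ring
    have h3 := sum_update_pair G i
    simp_rw [e2] at h3
    rw [← Finset.mul_sum] at h3
    have h4 : ∑ x : Fin n → Bool, G x = ∑ x : Fin n → Bool, deriv1 i f x * walsh S x := by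
      linarith
    rw [e1, h4]
  rw [key]

lemma TInf_singleton (f : (Fin n → Bool) → ℝ) (i : Fin n) :
    TInf f {i} = expectation (fun x => (deriv1 i f x)^2) := by
  have hp : ∑ S : Finset (Fin n), fwCoeff (deriv1 i f) S ^ 2
      = expectation (fun x => (deriv1 i f x)^2) := parseval (deriv1 i f)
  rw [← hp]
  rw [← Finset.sum_filter_add_sum_filter_not Finset.univ
    (fun S : Finset (Fin n) => i ∈ S) (fun S => fwCoeff (deriv1 i f) S ^ 2)]
  have hz : ∑ S ∈ Finset.univ.filter (fun S : Finset (Fin n) => i ∈ S),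
      fwCoeff (deriv1 i f) S ^ 2 = 0 := by
    refine Finset.sum_eq_zero fun S hS => ?_
    rw [fwCoeff_deriv1_of_mem (Finset.mem_filter.mp hS).2]
    ring
  rw [hz, zero_add]
  unfold TInf
  refine Finset.sum_nbij' (fun T => T.erase i) (fun S => insert i S) ?_ ?_ ?_ ?_ ?_
  · intro T hT
    simp only [Finset.mem_filter, Finset.mem_univ, true_and] at hT ⊢
    simp [Finset.mem_erase]
  · intro S hS
    simp only [Finset.mem_filter, Finset.mem_univ, true_and] at hS ⊢
    simp [Finset.singleton_subset_iff]
  · intro T hT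
    simp only [Finset.mem_filter, Finset.mem_univ, true_and,
      Finset.singleton_subset_iff] at hT
    exact Finset.insert_erase hT
  · intro S hS
    simp only [Finset.mem_filter, Finset.mem_univ, true_and] at hS
    exact Finset.erase_insert hS
  · intro T hT
    simp only [Finset.mem_filter, Finset.mem_univ, true_and,
      Finset.singleton_subset_iff] at hT
    rw [fwCoeff_deriv1_of_not_mem (Finset.notMem_erase i T) f, Finset.insert_erase hT]

lemma deriv1_sq (f : (Fin n → Bool) → ℝ) (i : Fin n) (x : Fin n → Bool) :
    (deriv1 i f x)^2 = (f x - f (flipBit x i))^2 / 4 := by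
  unfold deriv1 flipBit
  cases hx : x i with
  | false =>
    have h1 : Function.update x i false = x := by
      conv_lhs => rw [← hx]
      exact Function.update_eq_self i x
    rw [show (!false) = true from rfl, h1]
    ring
  | true =>
    have h1 : Function.update x i true = x := by
      conv_lhs => rw [← hx]
      exact Function.update_eq_self i x
    rw [show (!true) = false from rfl, h1]
    ring

lemma fwCoeff_empty (g : (Fin n → Bool) → ℝ) : fwCoeff g ∅ = expectation g := by
  unfold fwCoeff walsh
  simp

lemma var_le_totinf (g : (Fin n → Bool) → ℝ) :
    norm2sq g - (expectation g)^2 ≤ totinf g := by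
  have htot : totinf g = ∑ T : Finset (Fin n), (T.card : ℝ) * fwCoeff g T ^ 2 := by
    unfold totinf TInf
    simp_rw [Finset.singleton_subset_iff, Finset.sum_filter]
    rw [Finset.sum_comm]
    refine Finset.sum_congr rfl fun T _ => ?_
    rw [Finset.sum_ite_mem, Finset.univ_inter, Finset.sum_const, nsmul_eq_mul]
  have hpar := parseval g
  have hsplit : ∑ S : Finset (Fin n), fwCoeff g S ^ 2
      = fwCoeff g ∅ ^ 2 + ∑ S ∈ Finset.univ.erase ∅, fwCoeff g S ^ 2 :=
    (Finset.add_sum_erase Finset.univ _ (Finset.mem_univ ∅)).symm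
  have hmean : fwCoeff g ∅ = expectation g := fwCoeff_empty g
  have h1 : norm2sq g - (expectation g)^2 = ∑ S ∈ Finset.univ.erase ∅, fwCoeff g S ^ 2 := by
    rw [← hpar, hsplit, hmean]; ring
  rw [h1, htot]
  calc ∑ S ∈ Finset.univ.erase ∅, fwCoeff g S ^ 2
      ≤ ∑ S ∈ Finset.univ.erase ∅, (S.card : ℝ) * fwCoeff g S ^ 2 := by
        refine Finset.sum_le_sum fun S hS => ?_
        have hne : S ≠ ∅ := Finset.ne_of_mem_erase hS
        have hcard : (1:ℝ) ≤ S.card := by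
          have : 0 < S.card := Finset.card_pos.mpr (Finset.nonempty_of_ne_empty hne)
          exact_mod_cast this
        nlinarith [sq_nonneg (fwCoeff g S)]
    _ ≤ ∑ S : Finset (Fin n), (S.card : ℝ) * fwCoeff g S ^ 2 := by
        refine Finset.sum_le_sum_of_subset_of_nonneg (Finset.erase_subset _ _)
          fun S _ _ => by positivity

lemma expectation_mono {F G : (Fin n → Bool) → ℝ} (h : ∀ x, F x ≤ G x) :
    expectation F ≤ expectation G := by
  unfold expectation
  exact div_le_div_of_nonneg_right (Finset.sum_le_sum fun x _ => h x) (by positivity)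

lemma expectation_const_mul (c : ℝ) (F : (Fin n → Bool) → ℝ) :
    expectation (fun x => c * F x) = c * expectation F := by
  unfold expectation
  rw [← Finset.mul_sum, mul_div_assoc]

lemma const_le_expectation {m : ℝ} {F : (Fin n → Bool) → ℝ} (h : ∀ x, m ≤ F x) :
    m ≤ expectation F := by
  unfold expectation
  rw [le_div_iff₀ (by positivity : (0:ℝ) < 2^n)]
  calc m * 2^n = m * ((Finset.univ : Finset (Fin n → Bool)).card : ℝ) := by rw [card_cube]
    _ = ∑ _x : Fin n → Bool, m := by rw [Finset.sum_const, nsmul_eq_mul]; ring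
    _ ≤ ∑ x : Fin n → Bool, F x := Finset.sum_le_sum fun x _ => h x

lemma expectation_sub_sq (g : (Fin n → Bool) → ℝ) (c : ℝ) :
    expectation (fun x => (g x - c)^2)
      = (norm2sq g - (expectation g)^2) + (expectation g - c)^2 := by
  have hexp : ∑ x : Fin n → Bool, (g x - c)^2
      = (∑ x : Fin n → Bool, g x ^ 2) - 2*c*(∑ x : Fin n → Bool, g x) + (2:ℝ)^n * c^2 := by
    have : ∀ x : Fin n → Bool, (g x - c)^2 = g x ^2 - (2*c) * g x + c^2 := fun x => by ring
    simp_rw [this]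
    rw [Finset.sum_add_distrib, Finset.sum_sub_distrib, ← Finset.mul_sum,
      Finset.sum_const, nsmul_eq_mul, card_cube]
  unfold norm2sq expectation
  rw [hexp]
  have h2 : ((2:ℝ)^n) ≠ 0 := by positivity
  field_simp
  ring

lemma log_step {N c0 c1 : ℝ} (hN : 0 < N) (h1 : 0 ≤ c1) (h01 : c1 ≤ c0) :
    2*(c0+c1)*Real.log ((2*N)/(c0+c1)) ≤
      2*c0*Real.log (N/c0) + 2*c1*Real.log (N/c1) + 2*(c0-c1) := by
  rcases eq_or_lt_of_le h1 with hc1 | hc1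
  · rcases eq_or_lt_of_le (h1.trans h01) with hc0 | hc0
    · rw [← hc1, ← hc0]
      norm_num
    · rw [← hc1]
      norm_num
      have hsplit : Real.log (2*N/c0) = Real.log 2 + Real.log (N/c0) := by
        rw [show 2*N/c0 = 2*(N/c0) by ring,
          Real.log_mul (by norm_num) (by positivity)]
      rw [hsplit]
      have hlog2 : Real.log 2 ≤ 1 := by
        have := Real.log_le_sub_one_of_pos (by norm_num : (0:ℝ) < 2)
        linarith
      nlinarith
  · have hc0 : 0 < c0 := lt_of_lt_of_le hc1 h01
    have hspos : 0 < c0 + c1 := by linarith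
    have key : c0 * Real.log (2*c0/(c0+c1)) + c1 * Real.log (2*c1/(c0+c1)) ≤ c0 - c1 := by
      have k0 := Real.log_le_sub_one_of_pos (show (0:ℝ) < 2*c0/(c0+c1) by positivity)
      have k1 := Real.log_le_sub_one_of_pos (show (0:ℝ) < 2*c1/(c0+c1) by positivity)
      have e0 : 2*c0/(c0+c1) - 1 = (c0-c1)/(c0+c1) := by field_simp; ring
      have e1' : 2*c1/(c0+c1) - 1 = (c1-c0)/(c0+c1) := by field_simp; ring
      rw [e0] at k0; rw [e1'] at k1
      have t0 : c0 * Real.log (2*c0/(c0+c1)) ≤ c0 * ((c0-c1)/(c0+c1)) :=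
        mul_le_mul_of_nonneg_left k0 hc0.le
      have t1 : c1 * Real.log (2*c1/(c0+c1)) ≤ c1 * ((c1-c0)/(c0+c1)) :=
        mul_le_mul_of_nonneg_left k1 hc1.le
      have hsum : c0 * ((c0-c1)/(c0+c1)) + c1 * ((c1-c0)/(c0+c1)) = (c0-c1)^2/(c0+c1) := by
        field_simp; ring
      have hle : (c0-c1)^2/(c0+c1) ≤ c0-c1 := by
        rw [div_le_iff₀ hspos]
        nlinarith
      linarith
    have l0 : Real.log (2*c0/(c0+c1)) = Real.log 2 + Real.log c0 - Real.log (c0+c1) := by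
      rw [Real.log_div (show (0:ℝ) < _ by positivity).ne' hspos.ne', Real.log_mul (by norm_num) hc0.ne']
    have l1 : Real.log (2*c1/(c0+c1)) = Real.log 2 + Real.log c1 - Real.log (c0+c1) := by
      rw [Real.log_div (show (0:ℝ) < _ by positivity).ne' hspos.ne', Real.log_mul (by norm_num) hc1.ne']
    have m0 : Real.log (N/c0) = Real.log N - Real.log c0 := Real.log_div hN.ne' hc0.ne'
    have m1 : Real.log (N/c1) = Real.log N - Real.log c1 := Real.log_div hN.ne' hc1.ne'
    have mS : Real.log (2*N/(c0+c1)) = Real.log 2 + Real.log N - Real.log (c0+c1) := by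
      rw [Real.log_div (show (0:ℝ) < _ by positivity).ne' hspos.ne', Real.log_mul (by norm_num) hN.ne']
    rw [l0, l1] at key
    rw [mS, m0, m1]
    nlinarith [key]

noncomputable def bdCount (n : ℕ) (A : Finset (Fin n → Bool)) : ℕ :=
  ∑ i : Fin n, (Finset.univ.filter (fun x => (x ∈ A) ≠ (flipBit x i ∈ A))).card

lemma card_filter_succ (p : (Fin (n+1) → Bool) → Prop) [DecidablePred p] :
    (Finset.univ.filter p).card
      = (Finset.univ.filter (fun y : Fin n → Bool => p (Fin.cons false y))).card
        + (Finset.univ.filter (fun y : Fin n → Bool => p (Fin.cons true y))).card := by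
  rw [Finset.card_filter, Finset.card_filter, Finset.card_filter]
  rw [← Fintype.sum_equiv (Fin.consEquiv (fun _ : Fin (n+1) => Bool))
    (fun q : Bool × (Fin n → Bool) => if p (Fin.cons q.1 q.2) then 1 else 0)
    (fun x => if p x then 1 else 0) (fun q => rfl)]
  rw [Fintype.sum_prod_type]
  rw [Fintype.sum_bool]
  dsimp only
  omega

lemma flip_cons_zero (b : Bool) (y : Fin n → Bool) :
    flipBit (Fin.cons b y) 0 = Fin.cons (!b) y := by
  unfold flipBit
  rw [Fin.cons_zero, Fin.update_cons_zero]

lemma flip_cons_succ (b : Bool) (y : Fin n → Bool) (i : Fin n) :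
    flipBit (Fin.cons b y) i.succ = Fin.cons b (flipBit y i) := by
  unfold flipBit
  rw [Fin.cons_succ, Fin.cons_update]

lemma edge_iso : ∀ (n : ℕ) (A : Finset (Fin n → Bool)),
    2 * (A.card : ℝ) * Real.log ((2:ℝ)^n / A.card) ≤ (bdCount n A : ℝ) := by
  intro n
  induction n with
  | zero =>
    intro A
    have hle : A.card ≤ 1 := by
      have := Finset.card_le_univ A
      simpa using this
    rcases Nat.le_one_iff_eq_zero_or_eq_one.mp hle with h | h <;>
      · rw [h]
        norm_num
  | succ n ih =>
    intro A
    set A0 : Finset (Fin n → Bool) :=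
      Finset.univ.filter (fun y => Fin.cons false y ∈ A) with hA0
    set A1 : Finset (Fin n → Bool) :=
      Finset.univ.filter (fun y => Fin.cons true y ∈ A) with hA1
    have memA0 : ∀ y : Fin n → Bool, (Fin.cons false y ∈ A) ↔ (y ∈ A0) := by
      intro y; rw [hA0]; simp
    have memA1 : ∀ y : Fin n → Bool, (Fin.cons true y ∈ A) ↔ (y ∈ A1) := by
      intro y; rw [hA1]; simp
    have hAfilter : Finset.univ.filter (fun x => x ∈ A) = A := by
      ext x; simp
    have hcard : A.card = A0.card + A1.card := by
      conv_lhs => rw [← hAfilter]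
      rw [hA0, hA1]
      exact card_filter_succ (fun x => x ∈ A)
    set D : Finset (Fin n → Bool) :=
      Finset.univ.filter (fun y => (y ∈ A0) ≠ (y ∈ A1)) with hD
    -- boundary decomposition
    have hzero :
        (Finset.univ.filter
          (fun x : Fin (n+1) → Bool => (x ∈ A) ≠ (flipBit x 0 ∈ A))).card
          = 2 * D.card := by
      rw [card_filter_succ (fun x => (x ∈ A) ≠ (flipBit x 0 ∈ A))]
      have e0 : (Finset.univ.filter (fun y : Fin n → Bool =>
          (Fin.cons false y ∈ A) ≠ (flipBit (Fin.cons false y) 0 ∈ A))) = D := by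
        rw [hD]
        apply Finset.filter_congr
        intro y _
        rw [flip_cons_zero, show (!false) = true from rfl, ne_eq, ne_eq, memA0 y, memA1 y]
      have e1 : (Finset.univ.filter (fun y : Fin n → Bool =>
          (Fin.cons true y ∈ A) ≠ (flipBit (Fin.cons true y) 0 ∈ A))).card = D.card := by
        have : (Finset.univ.filter (fun y : Fin n → Bool =>
            (Fin.cons true y ∈ A) ≠ (flipBit (Fin.cons true y) 0 ∈ A))) = D := by
          rw [hD]
          apply Finset.filter_congr
          intro y _
          rw [flip_cons_zero, show (!true) = false from rfl, ne_eq, ne_eq, memA0 y, memA1 y]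
          exact ⟨fun h => fun he => h he.symm, fun h => fun he => h he.symm⟩
        rw [this]
      rw [e0, e1]
      omega
    have hsucc : ∀ i : Fin n,
        (Finset.univ.filter
          (fun x : Fin (n+1) → Bool => (x ∈ A) ≠ (flipBit x i.succ ∈ A))).card
          = (Finset.univ.filter (fun y : Fin n → Bool => (y ∈ A0) ≠ (flipBit y i ∈ A0))).card
            + (Finset.univ.filter (fun y : Fin n → Bool => (y ∈ A1) ≠ (flipBit y i ∈ A1))).card := by
      intro i
      rw [card_filter_succ (fun x => (x ∈ A) ≠ (flipBit x i.succ ∈ A))]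
      congr 1
      · congr 1
        apply Finset.filter_congr
        intro y _
        rw [flip_cons_succ, ne_eq, ne_eq, memA0 y, memA0 (flipBit y i)]
      · congr 1
        apply Finset.filter_congr
        intro y _
        rw [flip_cons_succ, ne_eq, ne_eq, memA1 y, memA1 (flipBit y i)]
    have hbd : bdCount (n+1) A = 2 * D.card + (bdCount n A0 + bdCount n A1) := by
      rw [bdCount, Fin.sum_univ_succ, hzero]
      congr 1
      rw [Finset.sum_congr rfl (fun i _ => hsucc i), Finset.sum_add_distrib]
      rfl
    -- |c0 - c1| ≤ D.card
    have hsub0 : A0 \ A1 ⊆ D := by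
      intro y hy
      rw [Finset.mem_sdiff] at hy
      rw [hD, Finset.mem_filter]
      refine ⟨Finset.mem_univ y, ?_⟩
      simp only [ne_eq, eq_iff_iff]
      intro h
      exact hy.2 (h.mp hy.1)
    have hsub1 : A1 \ A0 ⊆ D := by
      intro y hy
      rw [Finset.mem_sdiff] at hy
      rw [hD, Finset.mem_filter]
      refine ⟨Finset.mem_univ y, ?_⟩
      simp only [ne_eq, eq_iff_iff]
      intro h
      exact hy.2 (h.mpr hy.1)
    have hd0 : A0.card - A1.card ≤ D.card :=
      le_trans (Finset.le_card_sdiff A1 A0) (Finset.card_le_card hsub0)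
    have hd1 : A1.card - A0.card ≤ D.card :=
      le_trans (Finset.le_card_sdiff A0 A1) (Finset.card_le_card hsub1)
    -- assemble
    have hcardR : (A.card : ℝ) = (A0.card : ℝ) + (A1.card : ℝ) := by
      rw [hcard]; push_cast; ring
    have hbdR : (bdCount (n+1) A : ℝ)
        = 2 * (D.card : ℝ) + ((bdCount n A0 : ℝ) + (bdCount n A1 : ℝ)) := by
      rw [hbd]; push_cast; ring
    have hpow : (2:ℝ) * 2^n = 2^(n+1) := by rw [pow_succ]; ring
    rcases le_total A1.card A0.card with hle | hle
    · have hstep := log_step (show (0:ℝ) < 2^n by positivity)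
        (show (0:ℝ) ≤ (A1.card : ℝ) from Nat.cast_nonneg _)
        (show (A1.card : ℝ) ≤ (A0.card : ℝ) by exact_mod_cast hle)
      rw [hpow] at hstep
      have hDge : (A0.card : ℝ) - (A1.card : ℝ) ≤ (D.card : ℝ) := by
        have := hd0
        have h' : ((A0.card - A1.card : ℕ) : ℝ) ≤ (D.card : ℝ) := by exact_mod_cast this
        rwa [Nat.cast_sub hle] at h'
      rw [hcardR, hbdR]
      have h0 := ih A0
      have h1 := ih A1
      linarith
    · have hstep := log_step (show (0:ℝ) < 2^n by positivity)
        (show (0:ℝ) ≤ (A0.card : ℝ) from Nat.cast_nonneg _)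
        (show (A0.card : ℝ) ≤ (A1.card : ℝ) by exact_mod_cast hle)
      rw [hpow, add_comm ((A1.card:ℝ)) ((A0.card:ℝ))] at hstep
      have hDge : (A1.card : ℝ) - (A0.card : ℝ) ≤ (D.card : ℝ) := by
        have h' : ((A1.card - A0.card : ℕ) : ℝ) ≤ (D.card : ℝ) := by exact_mod_cast hd1
        rwa [Nat.cast_sub hle] at h'
      rw [hcardR, hbdR]
      have h0 := ih A0
      have h1 := ih A1
      linarith

lemma pr_eq_card (P : (Fin n → Bool) → Prop) [DecidablePred P] :
    pr P = ((Finset.univ.filter P).card : ℝ) / 2^n := by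
  unfold pr expectation
  congr 1
  rw [Finset.card_filter]
  push_cast
  refine Finset.sum_congr rfl fun x _ => ?_
  by_cases hx : P x
  · rw [if_pos hx, if_pos hx]
  · rw [if_neg hx, if_neg hx]

lemma pr_mono {P Q : (Fin n → Bool) → Prop} (h : ∀ x, P x → Q x) : pr P ≤ pr Q := by
  unfold pr
  apply expectation_mono
  intro x
  by_cases hx : P x
  · rw [if_pos hx, if_pos (h x hx)]
  · rw [if_neg hx]
    by_cases hq : Q x
    · rw [if_pos hq]; norm_num
    · rw [if_neg hq]

lemma pr_le_scaled {P : (Fin n → Bool) → Prop} {h : (Fin n → Bool) → ℝ}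
    (hp : ∀ x, P x → 1 ≤ h x) (hn : ∀ x, 0 ≤ h x) :
    pr P ≤ expectation h := by
  unfold pr
  apply expectation_mono
  intro x
  by_cases hx : P x
  · rw [if_pos hx]; exact hp x hx
  · rw [if_neg hx]; exact hn x

lemma pr_nonneg (P : (Fin n → Bool) → Prop) : 0 ≤ pr P := by
  unfold pr
  apply const_le_expectation
  intro x
  by_cases hx : P x
  · rw [if_pos hx]; norm_num
  · rw [if_neg hx]


end Stmt14

open Stmt14

/-- a `V_d`-valued function with small total influence is close to a
constant. -/
theorem statement14 (n d : ℕ) (hd : 2 ≤ d) (g : (Fin n → Bool) → ℝ)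
    (hval : ∀ x, (∃ m : ℤ, g x = m / 2 ^ (d - 1)) ∧ |g x| ≤ 2 ^ (2 * d))
    (h0 : 0 < totinf g) (h1 : totinf g < 1 / 2 ^ (5 * d)) :
    ∃ η : ℝ, (∃ x, g x = η) ∧
      pr (fun x => g x ≠ η) ≤
        2 ^ (2 * d - 1) * totinf g / Real.log (1 / (2 ^ (5 * d) * totinf g)) := by
  classical
  have gap : ∀ x y : Fin n → Bool, g x ≠ g y → (1:ℝ)/4^(d-1) ≤ (g x - g y)^2 := by
    intro x y hxy
    obtain ⟨mx, hmx⟩ := (hval x).1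
    obtain ⟨my, hmy⟩ := (hval y).1
    have hne : mx ≠ my := by
      intro h; exact hxy (by rw [hmx, hmy, h])
    have h1' : (1:ℝ) ≤ ((mx:ℝ) - my)^2 := by
      have hz : mx - my ≠ 0 := sub_ne_zero.mpr hne
      have hz2 : (1:ℤ) ≤ (mx - my)^2 := by
        rcases lt_or_gt_of_ne hz with h | h <;> nlinarith
      have hcast : ((1:ℤ):ℝ) ≤ (((mx - my)^2 : ℤ) : ℝ) := by exact_mod_cast hz2
      push_cast at hcast
      linarith
    have he : (g x - g y)^2 = ((mx:ℝ) - my)^2 / 4^(d-1) := by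
      rw [hmx, hmy, div_sub_div_same, div_pow]
      congr 1
      rw [← pow_mul, show (4:ℝ) = 2^2 by norm_num, ← pow_mul, mul_comm]
    rw [he]
    exact div_le_div_of_nonneg_right h1' (by positivity)
  set I := totinf g with hI
  set μ := expectation g with hμ
  obtain ⟨x₀, -, hx₀⟩ := Finset.exists_min_image (Finset.univ : Finset (Fin n → Bool))
    (fun x => (g x - μ)^2) Finset.univ_nonempty
  refine ⟨g x₀, ⟨x₀, rfl⟩, ?_⟩
  set η := g x₀ with hη
  have hVarle : norm2sq g - μ^2 ≤ I := var_le_totinf g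
  have hmin : (η - μ)^2 ≤ norm2sq g - μ^2 := by
    have h := const_le_expectation (m := (η - μ)^2) (F := fun x => (g x - μ)^2)
      (fun x => hx₀ x (Finset.mem_univ x))
    rw [expectation_sub_sq g μ] at h
    simpa [← hμ] using h
  have hEsq : expectation (fun x => (g x - η)^2) ≤ 2*I := by
    rw [expectation_sub_sq g η]
    have heq : (μ - η)^2 = (η - μ)^2 := by ring
    linarith
  have hα_le : pr (fun x => g x ≠ η) ≤ 2^(2*d-1) * I := by
    have hp : ∀ x : Fin n → Bool, g x ≠ η → (1:ℝ) ≤ 2^(2*(d-1)) * (g x - η)^2 := by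
      intro x h
      have hg := gap x x₀ (by rw [hη] at h; exact h)
      rw [div_le_iff₀ (by positivity)] at hg
      have h4 : (2:ℝ)^(2*(d-1)) = 4^(d-1) := by
        rw [show (4:ℝ) = 2^2 by norm_num, ← pow_mul, mul_comm]
      rw [h4, mul_comm]
      exact hg
    have hE := pr_le_scaled hp (fun x => by positivity)
    rw [expectation_const_mul] at hE
    have h2 : (2:ℝ)^(2*(d-1)) * (2*I) = 2^(2*d-1) * I := by
      rw [show (2:ℝ)^(2*d-1) = 2^(2*(d-1)) * 2 by rw [← pow_succ]; congr 1; omega]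
      ring
    calc pr (fun x => g x ≠ η)
        ≤ 2^(2*(d-1)) * expectation (fun x => (g x - η)^2) := hE
      _ ≤ 2^(2*(d-1)) * (2*I) := mul_le_mul_of_nonneg_left hEsq (by positivity)
      _ = 2^(2*d-1) * I := h2
  have hprα : pr (fun x => g x ≠ η)
      = ((Finset.univ.filter (fun x => g x ≠ η)).card : ℝ) / 2^n := pr_eq_card _
  set A : Finset (Fin n → Bool) := Finset.univ.filter (fun x => g x ≠ η) with hA
  have hper : ∀ i : Fin n,
      pr (fun x => (x ∈ A) ≠ (flipBit x i ∈ A)) ≤ 2^(2*d) * TInf g {i} := by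
    intro i
    have himp : ∀ x : Fin n → Bool,
        ((x ∈ A) ≠ (flipBit x i ∈ A)) → g x ≠ g (flipBit x i) := by
      intro x hx hgeq
      apply hx
      have hiff : (x ∈ A) ↔ (flipBit x i ∈ A) := by
        rw [hA]
        simp only [Finset.mem_filter, Finset.mem_univ, true_and]
        rw [hgeq]
      exact eq_iff_iff.mpr hiff
    have hp : ∀ x : Fin n → Bool, g x ≠ g (flipBit x i)
        → (1:ℝ) ≤ 2^(2*d) * (deriv1 i g x)^2 := by
      intro x h
      rw [deriv1_sq]
      have hg := gap x (flipBit x i) h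
      rw [div_le_iff₀ (by positivity)] at hg
      have hc : (2:ℝ)^(2*d) = 4^(d-1) * 4 := by
        rw [show (4:ℝ) = 2^2 by norm_num, ← pow_mul, ← pow_add]
        congr 1
        omega
      rw [hc]
      calc (1:ℝ) ≤ (g x - g (flipBit x i))^2 * 4^(d-1) := hg
        _ = 4^(d-1) * 4 * ((g x - g (flipBit x i))^2 / 4) := by ring
    calc pr (fun x => (x ∈ A) ≠ (flipBit x i ∈ A))
        ≤ pr (fun x => g x ≠ g (flipBit x i)) := pr_mono himp
      _ ≤ expectation (fun x => 2^(2*d) * (deriv1 i g x)^2) :=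
          pr_le_scaled hp (fun x => by positivity)
      _ = 2^(2*d) * expectation (fun x => (deriv1 i g x)^2) := expectation_const_mul _ _
      _ = 2^(2*d) * TInf g {i} := by rw [TInf_singleton]
  have hbd_pr : (bdCount n A : ℝ)
      = ∑ i : Fin n, 2^n * pr (fun x => (x ∈ A) ≠ (flipBit x i ∈ A)) := by
    rw [bdCount]
    push_cast
    refine Finset.sum_congr rfl fun i _ => ?_
    rw [pr_eq_card]
    field_simp
  have hbdle : (bdCount n A : ℝ) ≤ 2^n * (2^(2*d) * I) := by
    rw [hbd_pr]
    calc ∑ i : Fin n, 2^n * pr (fun x => (x ∈ A) ≠ (flipBit x i ∈ A))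
        ≤ ∑ i : Fin n, 2^n * (2^(2*d) * TInf g {i}) :=
          Finset.sum_le_sum (fun i _ =>
            mul_le_mul_of_nonneg_left (hper i) (by positivity))
      _ = 2^n * (2^(2*d) * I) := by
          simp_rw [← mul_assoc]
          rw [← Finset.mul_sum, hI, totinf, mul_assoc]
  have hiso := edge_iso n A
  set α := pr (fun x => g x ≠ η) with hαdef
  have hαcard : (A.card : ℝ) = α * 2^n := by
    rw [hprα]
    field_simp
  have hαnn : 0 ≤ α := pr_nonneg _
  have hIlt : 2^(5*d) * I < 1 := by
    have := (lt_div_iff₀ (by positivity : (0:ℝ) < 2^(5*d))).mp h1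
    nlinarith
  have hL : 0 < Real.log (1/(2^(5*d) * I)) := by
    apply Real.log_pos
    rw [lt_div_iff₀ (by positivity), one_mul]
    exact hIlt
  rcases eq_or_lt_of_le hαnn with hα0 | hαpos
  · rw [← hα0]
    exact div_nonneg (by positivity) hL.le
  · have h25 : (2:ℝ)^(2*d-1) ≤ 2^(5*d) := by
      apply pow_le_pow_right₀ (by norm_num) (by omega)
    have hαle5 : α ≤ 2^(5*d) * I := by
      calc α ≤ 2^(2*d-1) * I := hα_le
        _ ≤ 2^(5*d) * I := by nlinarith
    have hlogle : Real.log (1/(2^(5*d)*I)) ≤ Real.log (1/α) := by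
      apply Real.log_le_log (by positivity)
      exact one_div_le_one_div_of_le hαpos hαle5
    have hiso2 : 2*(α*2^n)*Real.log ((2:ℝ)^n/(α*2^n)) ≤ 2^n*(2^(2*d)*I) := by
      rw [← hαcard]
      exact le_trans hiso hbdle
    have hlogeq : (2:ℝ)^n/(α*2^n) = 1/α := by
      rw [eq_div_iff (ne_of_gt hαpos)]
      field_simp
    rw [hlogeq] at hiso2
    have h2 : (2:ℝ)*2^(2*d-1) = 2^(2*d) := by
      rw [← pow_succ']
      congr 1
      omega
    have hαlog : α * Real.log (1/α) ≤ 2^(2*d-1) * I := by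
      rw [← mul_le_mul_iff_right₀ (show (0:ℝ) < 2*2^n by positivity)]
      calc (2*2^n)*(α*Real.log (1/α)) = 2*(α*2^n)*Real.log (1/α) := by ring
        _ ≤ 2^n*(2^(2*d)*I) := hiso2
        _ = (2*2^n)*(2^(2*d-1)*I) := by rw [← h2]; ring
    rw [le_div_iff₀ hL]
    calc α * Real.log (1/(2^(5*d)*I))
        ≤ α * Real.log (1/α) := mul_le_mul_of_nonneg_left hlogle hαnn
      _ ≤ 2^(2*d-1) * I := hαlog
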